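/- arXiv:1510.08759 — 3 statements merged into one kernel-verified Lean document; each statement's English description precedes it below -/
import Mathlib

section
/- Let β ∈ R^+ and w ∈ W with w(β) ∈ R^-. Then for any alcove A and any k ≥ 0, w.(β↑^k A) = w(β)^+ ↓^k (w.A); in particular w_0.(β↑A) = w_0(β)^+ ↓ (w_0.A) for the longest element w_0. -/
open Module

section Preliminaries

variable {V : Type*} [AddCommGroup V] [Module ℚ V]

/-- Data of a reduced irreducible root system `R` in a `ℚ`-vector space `V`,
with positive roots, simple roots, coroots (in the dual space) and highest root. -/
structure RootSystemData (V : Type*) [AddCommGroup V] [Module ℚ V] where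
  R : Set V
  Rpos : Set V
  Δ : Set V
  coroot : V → Module.Dual ℚ V
  highest : V
  finite_R : R.Finite
  nonempty_R : R.Nonempty
  pos_subset : Rpos ⊆ R
  simple_subset : Δ ⊆ Rpos
  coroot_self : ∀ α ∈ R, coroot α α = 2
  neg_mem : ∀ α ∈ R, -α ∈ R
  coroot_neg : ∀ α ∈ R, coroot (-α) = -coroot α
  pos_or_neg : ∀ α ∈ R, (α ∈ Rpos ∧ -α ∉ Rpos) ∨ (-α ∈ Rpos ∧ α ∉ Rpos)
  reflect_mem : ∀ α ∈ R, ∀ β ∈ R, β - coroot α β • α ∈ R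
  coroot_int : ∀ α ∈ R, ∀ β ∈ R, ∃ m : ℤ, coroot α β = (m : ℚ)
  reduced : ∀ α ∈ R, (2 : ℚ) • α ∉ R
  pos_comb : ∀ α ∈ Rpos, α ∈ AddSubmonoid.closure Δ
  simple_indep : LinearIndependent ℚ (fun a : Δ => (a : V))
  irreducible : ∀ Δ₁ Δ₂ : Set V, Δ₁ ∪ Δ₂ = Δ → Δ₁.Nonempty → Δ₂.Nonempty →
    (∀ a ∈ Δ₁, ∀ b ∈ Δ₂, coroot a b = 0) → False
  highest_mem : highest ∈ Rpos
  highest_prop : ∀ α ∈ Rpos, highest - α ∈ AddSubmonoid.closure Δ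

/-- The affine reflection `s_{α,n}` on `V*`: `v ↦ v - (⟨α,v⟩ - n) α^∨`. -/
def sAff (α : V) (cα : Module.Dual ℚ V) (n : ℤ) (v : Module.Dual ℚ V) : Module.Dual ℚ V :=
  v - (v α - n) • cα

/-- Negative half space `H⁻_{α,n}`. -/
def Hm (α : V) (n : ℤ) : Set (Module.Dual ℚ V) := {v | v α < (n : ℚ)}

/-- Positive half space `H⁺_{α,n}`. -/
def Hp (α : V) (n : ℤ) : Set (Module.Dual ℚ V) := {v | (n : ℚ) < v α}

/-- Hyperplane `H_{α,n}`. -/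
def Hyp (α : V) (n : ℤ) : Set (Module.Dual ℚ V) := {v | v α = (n : ℚ)}

/-- Alcoves: nonempty open intersections of strips between consecutive root hyperplanes. -/
def IsAlcove (P : RootSystemData V) (A : Set (Module.Dual ℚ V)) : Prop :=
  A.Nonempty ∧ ∃ d : V → ℤ,
    A = {v | ∀ α ∈ P.Rpos, (d α : ℚ) < v α ∧ v α < (d α : ℚ) + 1}

/-- The minimal `m` with `A ⊆ H⁻_{β,m}`. -/
noncomputable def upIdx (β : V) (A : Set (Module.Dual ℚ V)) : ℤ := sInf {m : ℤ | A ⊆ Hm β m}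

/-- The maximal `m` with `A ⊆ H⁺_{β,m}`. -/
noncomputable def downIdx (β : V) (A : Set (Module.Dual ℚ V)) : ℤ := sSup {m : ℤ | A ⊆ Hp β m}

/-- The operation `β↑` on alcoves. -/
noncomputable def up (P : RootSystemData V) (β : V) (A : Set (Module.Dual ℚ V)) :
    Set (Module.Dual ℚ V) := sAff β (P.coroot β) (upIdx β A) '' A

/-- The operation `β↓` on alcoves. -/
noncomputable def down (P : RootSystemData V) (β : V) (A : Set (Module.Dual ℚ V)) :
    Set (Module.Dual ℚ V) := sAff β (P.coroot β) (downIdx β A) '' A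

/-- Contragredient action of a linear automorphism of `V` on `V*`. -/
def dualAct (w : V ≃ₗ[ℚ] V) (v : Module.Dual ℚ V) : Module.Dual ℚ V :=
  v ∘ₗ (w.symm : V →ₗ[ℚ] V)

/-- Generators of the finite Weyl group: the simple reflections on `V`. -/
def weylGens (P : RootSystemData V) : Set (V ≃ₗ[ℚ] V) :=
  {e | ∃ α ∈ P.Δ, ∀ x, e x = x - P.coroot α x • α}

/-- The finite Weyl group. -/
def Weyl (P : RootSystemData V) : Subgroup (V ≃ₗ[ℚ] V) := Subgroup.closure (weylGens P)

-- `w(β)⁺`: the positive root among `±w(β)`.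
open scoped Classical in
noncomputable def wplus (P : RootSystemData V) (w : V ≃ₗ[ℚ] V) (β : V) : V :=
  if w β ∈ P.Rpos then w β else -(w β)

/-- Generators of the affine Weyl group: the simple affine reflections on `V*`. -/
def affGens (P : RootSystemData V) : Set (Equiv.Perm (Module.Dual ℚ V)) :=
  {e | (∃ α ∈ P.Δ, ∀ v, e v = sAff α (P.coroot α) 0 v) ∨
       (∀ v, e v = sAff P.highest (P.coroot P.highest) 1 v)}

/-- The affine Weyl group, acting on `V*`. -/
def AffWeyl (P : RootSystemData V) : Subgroup (Equiv.Perm (Module.Dual ℚ V)) :=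
  Subgroup.closure (affGens P)

/-- The fundamental alcove `A_e`. -/
def Ae (P : RootSystemData V) : Set (Module.Dual ℚ V) :=
  {v | ∀ α ∈ P.Rpos, 0 < v α ∧ v α < 1}

/-- The alcoves `A_x`, `x ∈ W` (finite Weyl group). -/
def finAlc (P : RootSystemData V) : Set (Set (Module.Dual ℚ V)) :=
  {S | ∃ w ∈ Weyl P, S = dualAct w '' Ae P}

/-- `𝒜⁻_β`: finite-Weyl alcoves contained in `H⁻_{β,0}`. -/
def Aminus (P : RootSystemData V) (β : V) : Set (Set (Module.Dual ℚ V)) :=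
  {S | S ∈ finAlc P ∧ S ⊆ Hm β 0}

end Preliminaries

section Aux5

variable {V : Type*} [AddCommGroup V] [Module ℚ V]

lemma sAff_apply' (α : V) (cα : Module.Dual ℚ V) (n : ℤ) (v : Module.Dual ℚ V) (x : V) :
    sAff α cα n v x = v x - (v α - (n : ℚ)) * cα x := rfl

lemma dualAct_apply' (w : V ≃ₗ[ℚ] V) (v : Module.Dual ℚ V) (x : V) :
    dualAct w v x = v (w.symm x) := rfl

open Classical in
noncomputable def intc (P : RootSystemData V) (β : V) : V → ℤ := fun α =>
  if h : ∃ n : ℤ, P.coroot β α = (n : ℚ) then h.choose else 0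

lemma intc_spec (P : RootSystemData V) {β α : V} (hβ : β ∈ P.R) (hα : α ∈ P.R) :
    P.coroot β α = ((intc P β α : ℤ) : ℚ) := by
  have h := P.coroot_int β hβ α hα
  simp only [intc, dif_pos h]
  exact h.choose_spec

/-- The reflection `s_β` on `V`. -/
def refl' (P : RootSystemData V) (β : V) (x : V) : V := x - P.coroot β x • β

open Classical in
noncomputable def dprime (P : RootSystemData V) (β : V) (d : V → ℤ) (m : ℤ) : V → ℤ :=
  fun α' => if refl' P β α' ∈ P.Rpos then d (refl' P β α') - m * intc P β (refl' P β α')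
            else -(d (-(refl' P β α'))) + m * intc P β (-(refl' P β α')) - 1

lemma neg_not_pos (P : RootSystemData V) {α : V} (hα : α ∈ P.Rpos) : -α ∉ P.Rpos := by
  rcases P.pos_or_neg α (P.pos_subset hα) with h | h
  · exact h.2
  · exact absurd hα h.2

lemma alcove_up (P : RootSystemData V) {β : V} (hβ : β ∈ P.Rpos)
    {A : Set (Module.Dual ℚ V)} (hA : IsAlcove P A) (m : ℤ) :
    IsAlcove P (sAff β (P.coroot β) m '' A) := by
  classical
  obtain ⟨hne, d, hAd⟩ := hA
  have hβR : β ∈ P.R := P.pos_subset hβ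
  have h2 : P.coroot β β = 2 := P.coroot_self β hβR
  -- `sAff` is an involution
  have hinv : ∀ v : Module.Dual ℚ V,
      sAff β (P.coroot β) m (sAff β (P.coroot β) m v) = v := by
    intro v
    ext x
    rw [sAff_apply', sAff_apply', sAff_apply', h2]
    ring
  -- reflection facts
  have hsVR : ∀ α ∈ P.R, refl' P β α ∈ P.R := fun α hα => P.reflect_mem β hβR α hα
  have hcor : ∀ x : V, P.coroot β (refl' P β x) = -(P.coroot β x) := by
    intro x
    simp only [refl', map_sub, map_smul, h2, smul_eq_mul]
    ring
  have hsVsV : ∀ x : V, refl' P β (refl' P β x) = x := by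
    intro x
    have := hcor x
    simp only [refl'] at this ⊢
    rw [this]
    module
  have hsVneg : ∀ x : V, refl' P β (-x) = -(refl' P β x) := by
    intro x
    simp only [refl', map_neg]
    module
  -- evaluation of the image
  have heval : ∀ (v : Module.Dual ℚ V) (x : V),
      sAff β (P.coroot β) m v x = v (refl' P β x) + (m : ℚ) * P.coroot β x := by
    intro v x
    rw [sAff_apply']
    simp only [refl', map_sub, map_smul, smul_eq_mul]
    ring
  refine ⟨hne.image _, dprime P β d m, ?_⟩
  ext v'
  constructor
  · rintro ⟨v, hv, rfl⟩
    rw [hAd] at hv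
    intro α' hα'
    have hα'R : α' ∈ P.R := P.pos_subset hα'
    have hcandR : refl' P β α' ∈ P.R := hsVR α' hα'R
    rw [heval]
    by_cases h1 : refl' P β α' ∈ P.Rpos
    · have hvb := hv _ h1
      have hi : ((intc P β (refl' P β α') : ℤ) : ℚ) = -(P.coroot β α') := by
        rw [← intc_spec P hβR hcandR, hcor]
      simp only [dprime, if_pos h1]
      push_cast
      rw [hi]
      constructor <;> nlinarith [hvb.1, hvb.2]
    · have hnegpos : -(refl' P β α') ∈ P.Rpos := by
        rcases P.pos_or_neg _ hcandR with h | h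
        · exact absurd h.1 h1
        · exact h.1
      have hvb := hv _ hnegpos
      rw [map_neg] at hvb
      have hi : ((intc P β (-(refl' P β α')) : ℤ) : ℚ) = P.coroot β α' := by
        rw [← intc_spec P hβR (P.neg_mem _ hcandR), map_neg, hcor]
        ring
      simp only [dprime, if_neg h1]
      push_cast
      rw [hi]
      constructor <;> nlinarith [hvb.1, hvb.2]
  · intro hv'
    refine ⟨sAff β (P.coroot β) m v', ?_, hinv v'⟩
    rw [hAd]
    intro α hα
    have hαR : α ∈ P.R := P.pos_subset hα
    have h''R : refl' P β α ∈ P.R := hsVR α hαR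
    rw [heval]
    by_cases hc1 : refl' P β α ∈ P.Rpos
    · have hd := hv' _ hc1
      have hi : ((intc P β α : ℤ) : ℚ) = P.coroot β α := (intc_spec P hβR hαR).symm
      simp only [dprime, hsVsV α, if_pos hα] at hd
      push_cast at hd
      rw [hi] at hd
      constructor <;> nlinarith [hd.1, hd.2]
    · have hnegpos : -(refl' P β α) ∈ P.Rpos := by
        rcases P.pos_or_neg _ h''R with h | h
        · exact absurd h.1 hc1
        · exact h.1
      have hd := hv' _ hnegpos
      have hre : refl' P β (-(refl' P β α)) = -α := by rw [hsVneg, hsVsV]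
      have hnank : -α ∉ P.Rpos := neg_not_pos P hα
      simp only [dprime, hre, if_neg hnank, neg_neg] at hd
      have hi : ((intc P β α : ℤ) : ℚ) = P.coroot β α := (intc_spec P hβR hαR).symm
      push_cast at hd
      rw [hi, map_neg] at hd
      constructor <;> nlinarith [hd.1, hd.2]

lemma key_step (P : RootSystemData V) {β : V} (hβ : β ∈ P.Rpos) (wV : V ≃ₗ[ℚ] V)
    (hequiv : ∀ γ x : V, P.coroot (wV γ) x = P.coroot γ (wV.symm x))
    (hneg : -(wV β) ∈ P.Rpos) {A : Set (Module.Dual ℚ V)} (hA : IsAlcove P A) :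
    dualAct wV '' up P β A = down P (-(wV β)) (dualAct wV '' A) := by
  classical
  obtain ⟨⟨v₀, hv₀⟩, d, hAd⟩ := hA
  have hβR : β ∈ P.R := P.pos_subset hβ
  have hγR : -(wV β) ∈ P.R := P.pos_subset hneg
  have hwβR : wV β ∈ P.R := by simpa using P.neg_mem _ hγR
  have hcorγ : ∀ x : V, P.coroot (-(wV β)) x = -(P.coroot β (wV.symm x)) := by
    intro x
    rw [P.coroot_neg _ hwβR]
    simp [hequiv]
  have hγv : ∀ v : Module.Dual ℚ V, dualAct wV v (-(wV β)) = -(v β) := by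
    intro v
    rw [dualAct_apply', map_neg, wV.symm_apply_apply, map_neg]
  set S : Set ℤ := {n : ℤ | A ⊆ Hm β n} with hS
  have hS1 : (d β + 1) ∈ S := by
    intro v hv
    rw [hAd] at hv
    have := (hv β hβ).2
    simp only [Hm, Set.mem_setOf_eq]
    push_cast
    linarith
  have hSbdd : BddBelow S := by
    refine ⟨d β + 1, fun n hn => ?_⟩
    have h1 : v₀ β < (n : ℚ) := hn hv₀
    rw [hAd] at hv₀
    have h2 : (d β : ℚ) < v₀ β := (hv₀ β hβ).1
    have : (d β : ℚ) < (n : ℚ) := lt_trans h2 h1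
    exact_mod_cast this
  have hSne : S.Nonempty := ⟨d β + 1, hS1⟩
  have hup : upIdx β A = sInf S := rfl
  have hT : {n : ℤ | dualAct wV '' A ⊆ Hp (-(wV β)) n} = {n : ℤ | A ⊆ Hm β (-n)} := by
    ext n
    constructor
    · intro h v hv
      have := h (Set.mem_image_of_mem _ hv)
      simp only [Hp, Set.mem_setOf_eq, hγv] at this
      simp only [Hm, Set.mem_setOf_eq]
      push_cast
      linarith
    · rintro h _ ⟨v, hv, rfl⟩
      have := h hv
      simp only [Hm, Set.mem_setOf_eq] at this
      push_cast at this
      simp only [Hp, Set.mem_setOf_eq, hγv]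
      linarith
  have hdown : downIdx (-(wV β)) (dualAct wV '' A) = -(upIdx β A) := by
    have hgr : IsGreatest {n : ℤ | dualAct wV '' A ⊆ Hp (-(wV β)) n} (-(sInf S)) := by
      constructor
      · rw [hT]
        simp only [Set.mem_setOf_eq, neg_neg]
        exact Int.csInf_mem hSne hSbdd
      · intro n hn
        rw [hT] at hn
        have : sInf S ≤ -n := csInf_le hSbdd hn
        linarith
    rw [hup]
    exact hgr.csSup_eq
  have hcomm : ∀ v : Module.Dual ℚ V,
      dualAct wV (sAff β (P.coroot β) (upIdx β A) v) =
        sAff (-(wV β)) (P.coroot (-(wV β))) (-(upIdx β A)) (dualAct wV v) := by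
    intro v
    ext x
    rw [dualAct_apply', sAff_apply', sAff_apply', hγv v, hcorγ x, dualAct_apply']
    push_cast
    ring
  unfold up down
  rw [hdown, Set.image_image, Set.image_image]
  simp only [hcomm]

end Aux5

/-- if `w(β)` is negative then `w.(β↑ᵏA) = w(β)⁺ ↓ᵏ (w.A)` for all `k`;
in particular this holds for the longest element `w₀` (which makes all positive
roots negative). -/
theorem stmt5 {V : Type*} [AddCommGroup V] [Module ℚ V] (P : RootSystemData V)
    (β : V) (hβ : β ∈ P.Rpos) (wV : V ≃ₗ[ℚ] V) (hw : wV ∈ Weyl P)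
    (hequiv : ∀ γ x : V, P.coroot (wV γ) x = P.coroot γ (wV.symm x))
    (hneg : -(wV β) ∈ P.Rpos) :
    (∀ (k : ℕ) (A : Set (Module.Dual ℚ V)), IsAlcove P A →
      dualAct wV '' ((up P β)^[k] A) = (down P (wplus P wV β))^[k] (dualAct wV '' A)) ∧
    ((∀ γ ∈ P.Rpos, -(wV γ) ∈ P.Rpos) → ∀ A : Set (Module.Dual ℚ V), IsAlcove P A →
      dualAct wV '' up P β A = down P (wplus P wV β) (dualAct wV '' A)) := by
  classical
  have hγR : -(wV β) ∈ P.R := P.pos_subset hneg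
  have hnpos : wV β ∉ P.Rpos := by
    rcases P.pos_or_neg _ hγR with h | h
    · simpa using h.2
    · exact absurd hneg h.2
  have hwp : wplus P wV β = -(wV β) := by
    simp only [wplus, if_neg hnpos]
  have main : ∀ (k : ℕ) (A : Set (Module.Dual ℚ V)), IsAlcove P A →
      dualAct wV '' ((up P β)^[k] A) =
        (down P (wplus P wV β))^[k] (dualAct wV '' A) := by
    intro k
    induction k with
    | zero => intro A _; simp
    | succ k ih =>
      intro A hA
      rw [Function.iterate_succ_apply, Function.iterate_succ_apply]
      have hupA : IsAlcove P (up P β A) := alcove_up P hβ hA _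
      rw [ih (up P β A) hupA, hwp, key_step P hβ wV hequiv hneg hA]
  refine ⟨main, fun _ A hA => ?_⟩
  have h1 := main 1 A hA
  simpa using h1
end

section
/- Let A_w be an alcove in the anti-fundamental box and let (s_1,…,s_l) be a reduced expression of w_0 with β_k = s_1⋯s_{k-1}(α_k) ∈ R^+. Then for each k, s_1⋯s_{k-1}.A_w ⊂ H_{β_k,0}^- ∩ H_{β_k,-1}^+, and consequently s_1⋯s_k.A_w = β_k ↑ (s_1⋯s_{k-1}.A_w). In particular the sequence A_w, β_1↑A_w, β_2↑β_1↑A_w, …, ends at w_0.A_w: the alcove w_0.A_w is reached from A_w by l(w_0) successive up-operations. -/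
open Module

/-- The (finite) reflection associated with a root. -/
noncomputable def sRefl {V : Type*} [AddCommGroup V] [Module ℚ V]
    (P : RootSystemData V) (α : V) (hα : α ∈ P.R) : V ≃ₗ[ℚ] V :=
  Module.reflection (P.coroot_self α hα)

/-- The product `s_1 ⋯ s_k` of the first `k` reflections of a word. -/
noncomputable def wordProd {V : Type*} [AddCommGroup V] [Module ℚ V]
    (P : RootSystemData V) {l : ℕ} (σ : Fin l → V)
    (hσ : ∀ k, σ k ∈ P.R) (k : ℕ) : V ≃ₗ[ℚ] V :=
  ((List.ofFn fun i => sRefl P (σ i) (hσ i)).take k).prod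


section AuxStmt9

variable {V : Type*} [AddCommGroup V] [Module ℚ V]

lemma wordProd_mem' (P : RootSystemData V) {l : ℕ} (σ : Fin l → V)
    (hσΔ : ∀ k, σ k ∈ P.Δ) (hσ : ∀ k, σ k ∈ P.R) (k : ℕ) :
    wordProd P σ hσ k ∈ Weyl P := by
  apply Subgroup.list_prod_mem
  intro x hx
  have hx' := List.mem_of_mem_take hx
  rw [List.mem_ofFn] at hx'
  obtain ⟨i, rfl⟩ := hx'
  refine Subgroup.subset_closure ⟨σ i, hσΔ i, fun x => ?_⟩
  simp [sRefl, Module.reflection_apply]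

lemma wordProd_succ' (P : RootSystemData V) {l : ℕ} (σ : Fin l → V)
    (hσ : ∀ k, σ k ∈ P.R) {k : ℕ} (hk : k < l) :
    wordProd P σ hσ (k + 1) = wordProd P σ hσ k * sRefl P (σ ⟨k, hk⟩) (hσ ⟨k, hk⟩) := by
  unfold wordProd
  rw [List.take_succ]
  simp [List.getElem?_ofFn, List.ofFnNthVal, hk]

end AuxStmt9

/-- for an alcove `A_w` in the anti-fundamental box and a reduced
expression of `w₀`, each partial image `s_1⋯s_{k-1}.A_w` lies in the strip
`H⁻_{β_k,0} ∩ H⁺_{β_k,-1}`, the next step is `β_k ↑`, and `w₀.A_w` is reached from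
`A_w` by `l(w₀)` successive up-operations. -/
theorem stmt9 {V : Type*} [AddCommGroup V] [Module ℚ V] (P : RootSystemData V)
    {l : ℕ} (σ : Fin l → V) (hσΔ : ∀ k, σ k ∈ P.Δ) (hσ : ∀ k, σ k ∈ P.R)
    (hred : ∀ (m : ℕ) (g : Fin m → (V ≃ₗ[ℚ] V)),
      (∀ i, ∃ α ∈ P.Δ, ∃ hα : α ∈ P.R, g i = sRefl P α hα) →
      (List.ofFn g).prod = wordProd P σ hσ l → l ≤ m)
    (hequiv : ∀ w : V ≃ₗ[ℚ] V, w ∈ Weyl P →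
      ∀ γ x : V, P.coroot (w γ) x = P.coroot γ (w.symm x))
    (A : Set (Module.Dual ℚ V)) (hA : IsAlcove P A)
    (hbox : ∀ α ∈ P.Δ, ∀ v ∈ A, -1 < v α ∧ v α < 0) :
    (∀ k : Fin l,
      (dualAct (wordProd P σ hσ k.val) '' A ⊆
        Hm (wordProd P σ hσ k.val (σ k)) 0 ∩ Hp (wordProd P σ hσ k.val (σ k)) (-1)) ∧
      dualAct (wordProd P σ hσ (k.val + 1)) '' A =
        up P (wordProd P σ hσ k.val (σ k)) (dualAct (wordProd P σ hσ k.val) '' A)) ∧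
    (List.finRange l).foldl (fun S k => up P (wordProd P σ hσ k.val (σ k)) S) A =
      dualAct (wordProd P σ hσ l) '' A := by
  classical
  obtain ⟨⟨v₀, hv₀⟩, -⟩ := hA
  have key : ∀ k : Fin l,
      (dualAct (wordProd P σ hσ k.val) '' A ⊆
        Hm (wordProd P σ hσ k.val (σ k)) 0 ∩ Hp (wordProd P σ hσ k.val (σ k)) (-1)) ∧
      dualAct (wordProd P σ hσ (k.val + 1)) '' A =
        up P (wordProd P σ hσ k.val (σ k)) (dualAct (wordProd P σ hσ k.val) '' A) := by
    intro k
    set w := wordProd P σ hσ k.val with hw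
    have hwW : w ∈ Weyl P := wordProd_mem' P σ hσΔ hσ k.val
    have hval : ∀ v : Module.Dual ℚ V, dualAct w v (w (σ k)) = v (σ k) := by
      intro v
      rw [dualAct_apply', LinearEquiv.symm_apply_apply]
    have hsub : dualAct w '' A ⊆ Hm (w (σ k)) 0 ∩ Hp (w (σ k)) (-1) := by
      rintro u ⟨v, hv, rfl⟩
      have hb := hbox (σ k) (hσΔ k) v hv
      constructor
      · show dualAct w v (w (σ k)) < ((0 : ℤ) : ℚ)
        rw [hval]
        exact_mod_cast hb.2
      · show ((-1 : ℤ) : ℚ) < dualAct w v (w (σ k))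
        rw [hval]
        exact_mod_cast hb.1
    refine ⟨hsub, ?_⟩
    have hidx : upIdx (w (σ k)) (dualAct w '' A) = 0 := by
      apply IsLeast.csInf_eq
      constructor
      · intro u hu
        exact (hsub hu).1
      · intro m hm
        have hmem : dualAct w v₀ ∈ dualAct w '' A := ⟨v₀, hv₀, rfl⟩
        have h1 : dualAct w v₀ (w (σ k)) < (m : ℚ) := hm hmem
        rw [hval] at h1
        have h2 := (hbox (σ k) (hσΔ k) v₀ hv₀).1
        have h3 : (-1 : ℚ) < (m : ℚ) := lt_trans h2 h1
        have h4 : (-1 : ℤ) < m := by exact_mod_cast h3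
        omega
    have hstep : ∀ v : Module.Dual ℚ V,
        dualAct (w * sRefl P (σ k) (hσ k)) v
          = sAff (w (σ k)) (P.coroot (w (σ k))) 0 (dualAct w v) := by
      intro v
      ext x
      have hsymm : (w * sRefl P (σ k) (hσ k)).symm x
          = (sRefl P (σ k) (hσ k)).symm (w.symm x) := rfl
      have hrefl : (sRefl P (σ k) (hσ k)).symm (w.symm x)
          = w.symm x - P.coroot (σ k) (w.symm x) • σ k := by
        rw [sRefl, Module.reflection_symm, Module.reflection_apply]
      have hco : P.coroot (w (σ k)) x = P.coroot (σ k) (w.symm x) := hequiv w hwW (σ k) x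
      rw [dualAct_apply', hsymm, hrefl]
      show v (w.symm x - P.coroot (σ k) (w.symm x) • σ k)
          = dualAct w v x - (dualAct w v (w (σ k)) - ((0 : ℤ) : ℚ)) • (P.coroot (w (σ k))) x
      rw [hval, map_sub, map_smul, dualAct_apply', hco]
      push_cast
      simp only [smul_eq_mul]
      ring
    rw [wordProd_succ' P σ hσ k.isLt, up, hidx, Set.image_image]
    exact Set.image_congr fun v _ => hstep v
  refine ⟨key, ?_⟩
  have hfold : ∀ n, n ≤ l →
      ((List.finRange l).take n).foldl
        (fun S k => up P (wordProd P σ hσ k.val (σ k)) S) A =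
      dualAct (wordProd P σ hσ n) '' A := by
    intro n
    induction n with
    | zero =>
      intro _
      have h1 : ∀ v : Module.Dual ℚ V, dualAct (wordProd P σ hσ 0) v = v := by
        intro v; ext x; rfl
      simp only [List.take_zero, List.foldl_nil]
      rw [Set.image_congr fun v _ => h1 v]
      exact (Set.image_id A).symm
    | succ n ih =>
      intro hn
      have hnl : n < l := hn
      have hget : (List.finRange l)[n]? = some ⟨n, hnl⟩ := by
        rw [List.getElem?_eq_getElem (by simpa using hnl)]
        simp
      rw [List.take_succ, hget, List.foldl_append, ih (le_of_lt hnl)]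
      simp only [Option.toList_some, List.foldl_cons, List.foldl_nil]
      exact ((key ⟨n, hnl⟩).2).symm
  have hall : (List.finRange l).take l = List.finRange l :=
    List.take_of_length_le (by simp)
  rw [← hall]
  exact hfold l le_rfl
end

section
/- Let w_0 be the longest element of the finite Weyl group W acting on the set of alcoves, and for an alcove A let A ∈ 𝒜_β^- mean A = A_x for some x ∈ W with A ⊂ H_{β,0}^-. Then for β ∈ R^+ and an alcove A: w_0.(β↑A) ∈ 𝒜^-_{w_0(β)^+} if and only if A ∈ 𝒜_β^-; and w_0.(β↑A) ∈ w_0(β)^+ ↑ 𝒜^-_{w_0(β)^+} if and only if A ∈ β ↓ 𝒜_β^-. -/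
open Module

/-!
If `A` lies in the strip `k < ⟨·, β⟩ < k + 1`, then `β↑A = s_{β,k+1} A` lies in the strip
`k + 1` for `β`, and `w₀.(β↑A)` in the strip `-k - 2` for `γ = -w₀(β)`. Every alcove `A_x`,
`x ∈ W`, lies in the strip `0` or `-1` of each positive root `δ`, and lies in `𝒜⁻_δ` iff it
lies in the strip `-1`. On alcoves, `δ↑` and `δ↓` are mutually inverse, so `S ∈ δ↑𝒜⁻_δ` iff
`δ↓S ∈ 𝒜⁻_δ`, and `S ∈ δ↓𝒜⁻_δ` iff `δ↑S ∈ 𝒜⁻_δ`. Both equivalences then come down to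
`k = -1`, resp. `k = -2`, together with the stability of `{A_x | x ∈ W}` under `W` and under
the linear reflections `s_{δ,0}`.

This stability needs `s_δ ∈ W` for every positive root `δ`, which is proved by induction on
the height of `δ`: if `δ` is not simple, some simple `α` has `⟨α, δ^∨⟩ > 0`, hence
`⟨δ, α^∨⟩ > 0`, so `s_α δ` is a positive root of smaller height, and `s_α s_{s_α δ} s_α` acts
as `s_δ` on `R` by uniqueness of coroots. The axioms do not ask the reflections to permute the
coroots; the sign and uniqueness facts all come from the finiteness of `R`.
-/

section Strip

variable {V : Type*} [AddCommGroup V] [Module ℚ V]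

def InStrip (δ : V) (k : ℤ) (S : Set (Module.Dual ℚ V)) : Prop :=
  ∀ v ∈ S, (k : ℚ) < v δ ∧ v δ < k + 1

variable {δ : V} {c : Module.Dual ℚ V} {k l : ℤ} {S : Set (Module.Dual ℚ V)}

theorem InStrip.eq (hS : InStrip δ k S) (hS' : InStrip δ l S) (hne : S.Nonempty) : k = l := by
  obtain ⟨v, hv⟩ := hne
  obtain ⟨h1, h2⟩ := hS v hv
  obtain ⟨h3, h4⟩ := hS' v hv
  have : k < l + 1 := by exact_mod_cast h1.trans h4
  have : l < k + 1 := by exact_mod_cast h3.trans h2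
  omega

theorem sAff_apply_self (h2 : c δ = 2) (n : ℤ) (v : Module.Dual ℚ V) :
    sAff δ c n v δ = 2 * n - v δ := by
  simp only [sAff, LinearMap.sub_apply, LinearMap.smul_apply, smul_eq_mul, h2]
  ring

theorem sAff_involutive (h2 : c δ = 2) (n : ℤ) : Function.Involutive (sAff δ c n) := by
  intro v
  ext x
  simp only [sAff, LinearMap.sub_apply, LinearMap.smul_apply, smul_eq_mul, h2]
  ring

theorem InStrip.image_sAff (hS : InStrip δ k S) (h2 : c δ = 2) {n : ℤ} (hl : k + l + 1 = 2 * n) :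
    InStrip δ l (sAff δ c n '' S) := by
  rintro _ ⟨v, hv, rfl⟩
  have hl' : (k : ℚ) + l + 1 = 2 * n := by exact_mod_cast hl
  rw [sAff_apply_self h2]
  constructor <;> linarith [hS v hv]

theorem InStrip.image_dualAct (hS : InStrip δ k S) (w : V ≃ₗ[ℚ] V) :
    InStrip (-(w δ)) (-k - 1) (dualAct w '' S) := by
  rintro _ ⟨v, hv, rfl⟩
  have : dualAct w v (-(w δ)) = -v δ := by simp [dualAct]
  rw [this]
  push_cast
  constructor <;> linarith [hS v hv]

theorem InStrip.upIdx_eq (hS : InStrip δ k S) (hne : S.Nonempty) : upIdx δ S = k + 1 := by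
  have : {m : ℤ | S ⊆ Hm δ m} = Set.Ici (k + 1) := by
    ext m
    refine ⟨fun hm => ?_, fun hm v hv => ?_⟩
    · obtain ⟨v, hv⟩ := hne
      have : (k : ℚ) < m := (hS v hv).1.trans (hm hv)
      exact_mod_cast this
    · have : ((k + 1 : ℤ) : ℚ) ≤ m := by exact_mod_cast hm
      push_cast at this
      exact (hS v hv).2.trans_le this
  rw [upIdx, this, csInf_Ici]

theorem InStrip.downIdx_eq (hS : InStrip δ k S) (hne : S.Nonempty) : downIdx δ S = k := by
  have : {m : ℤ | S ⊆ Hp δ m} = Set.Iic k := by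
    ext m
    refine ⟨fun hm => ?_, fun hm v hv => ?_⟩
    · obtain ⟨v, hv⟩ := hne
      have : (m : ℚ) < k + 1 := (hm hv).trans (hS v hv).2
      have : m < k + 1 := by exact_mod_cast this
      exact Int.lt_add_one_iff.mp this
    · have : (m : ℚ) ≤ k := by exact_mod_cast hm
      exact this.trans_lt (hS v hv).1
  rw [downIdx, this, csSup_Iic]

end Strip

namespace RootSystemData

variable {V : Type*} [AddCommGroup V] [Module ℚ V] (P : RootSystemData V) {α β ρ : V}

theorem ne_zero_of_mem (hβ : β ∈ P.R) : β ≠ 0 := by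
  rintro rfl
  simpa using P.coroot_self 0 hβ

theorem simple_mem (hα : α ∈ P.Δ) : α ∈ P.R := P.pos_subset (P.simple_subset hα)

noncomputable abbrev reflection (hβ : β ∈ P.R) : V ≃ₗ[ℚ] V :=
  Module.reflection (P.coroot_self β hβ)

theorem reflection_apply_mem (hβ : β ∈ P.R) (hρ : ρ ∈ P.R) : P.reflection hβ ρ ∈ P.R := by
  rw [Module.reflection_apply]
  exact P.reflect_mem β hβ ρ hρ

theorem not_injective_of_forall_mem {f : ℕ → V} (hf : ∀ k, f k ∈ P.R) : ¬ Function.Injective f :=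
  fun hinj => P.finite_R.not_infinite (Set.infinite_of_injective_forall_mem hinj hf)

theorem not_forall_add_smul_mem (ρ : V) {v : V} (hv : v ≠ 0) :
    ¬ ∀ k : ℕ, ρ + (k : ℚ) • v ∈ P.R := fun h =>
  P.not_injective_of_forall_mem h fun k l hkl => by
    exact_mod_cast smul_left_injective ℚ hv (add_left_cancel hkl)

theorem coroot_ne_zero_of_coroot_pos (hα : α ∈ P.R) (hβ : β ∈ P.R) (h : 0 < P.coroot β α) :
    P.coroot α β ≠ 0 := by
  intro h0
  set n := P.coroot β α
  -- `(s_β s_α)²` translates the line `α + ℚ β` by `-2n β`.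
  have htrans : ∀ c : ℚ, P.reflection hβ (P.reflection hα (P.reflection hβ
      (P.reflection hα (α + c • β)))) = α + (c - 2 * n) • β := by
    intro c
    simp only [Module.reflection_apply, map_add, map_sub, map_smul,
      P.coroot_self α hα, P.coroot_self β hβ, h0]
    module
  refine P.not_forall_add_smul_mem α (v := (-2 * n) • β)
    (smul_ne_zero (by linarith) (P.ne_zero_of_mem hβ)) fun k => ?_
  induction k with
  | zero => simpa using hα
  | succ k ih =>
    rw [smul_smul] at ih ⊢
    have := P.reflection_apply_mem hβ (P.reflection_apply_mem hα
      (P.reflection_apply_mem hβ (P.reflection_apply_mem hα ih)))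
    rw [htrans] at this
    convert this using 3
    push_cast
    ring

theorem neg_one_lt_coroot_of_one_le_coroot (hα : α ∈ P.R) (hβ : β ∈ P.R)
    (hn : 1 ≤ P.coroot β α) : -1 < P.coroot α β := by
  by_contra! hm
  set m := P.coroot α β
  set n := P.coroot β α
  set τ : V → V := fun x => -P.reflection hα (P.reflection hβ x)
  have hτR : Set.MapsTo τ P.R P.R := fun x hx =>
    P.neg_mem _ (P.reflection_apply_mem hα (P.reflection_apply_mem hβ hx))
  have hτα : ∀ x, P.coroot α (τ x) = P.coroot α x - m * P.coroot β x := by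
    intro x
    simp only [τ, Module.reflection_apply, map_neg, map_sub, map_smul, smul_eq_mul,
      P.coroot_self α hα]
    ring
  have hτβ : ∀ x, P.coroot β (τ x) = P.coroot β x + n * P.coroot α (τ x) := by
    intro x
    rw [hτα]
    simp only [τ, Module.reflection_apply, map_neg, map_sub, map_smul, smul_eq_mul,
      P.coroot_self β hβ]
    ring
  -- Along the `τ`-orbit of `β` the pairing with `β^∨` grows without bound.
  have hinv : ∀ k, 2 ≤ P.coroot β (τ^[k] β) ∧
      -m ≤ P.coroot α (τ^[k] β) - m * P.coroot β (τ^[k] β) := by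
    intro k
    induction k with
    | zero => simp only [Function.iterate_zero_apply, P.coroot_self β hβ]; constructor <;> linarith
    | succ k ih =>
      obtain ⟨hB, hU⟩ := ih
      have hpos : 0 ≤ P.coroot β (τ^[k] β) +
          n * (P.coroot α (τ^[k] β) - m * P.coroot β (τ^[k] β)) := by nlinarith
      rw [Function.iterate_succ_apply', hτβ, hτα]
      constructor <;> nlinarith
  have hmono : StrictMono fun k => P.coroot β (τ^[k] β) := strictMono_nat_of_lt_succ fun k => by
    rw [Function.iterate_succ_apply', hτβ, hτα]
    nlinarith [hinv k]
  exact P.not_injective_of_forall_mem (fun k => hτR.iterate k hβ)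
    hmono.injective.of_comp

theorem coroot_pos_of_coroot_pos (hα : α ∈ P.R) (hβ : β ∈ P.R) (h : 0 < P.coroot β α) :
    0 < P.coroot α β := by
  obtain ⟨m, hm⟩ := P.coroot_int α hα β hβ
  obtain ⟨n, hn⟩ := P.coroot_int β hβ α hα
  have hm0 := P.coroot_ne_zero_of_coroot_pos hα hβ h
  rw [hn] at h
  have hm1 := P.neg_one_lt_coroot_of_one_le_coroot hα hβ (by
    rw [hn]; exact_mod_cast (show 0 < n by exact_mod_cast h))
  rw [hm] at hm0 hm1 ⊢
  have : m ≠ 0 := by exact_mod_cast hm0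
  have : -1 < m := by exact_mod_cast hm1
  exact_mod_cast (show 0 < m by omega)

noncomputable def simpleComb (c : P.Δ →₀ ℕ) : V :=
  Finsupp.linearCombination ℕ ((↑) : P.Δ → V) c

theorem simpleComb_injective : Function.Injective P.simpleComb :=
  P.simple_indep.restrict_scalars' ℕ

theorem simpleComb_add (c c' : P.Δ →₀ ℕ) :
    P.simpleComb (c + c') = P.simpleComb c + P.simpleComb c' :=
  map_add _ c c'

theorem simpleComb_single (a : P.Δ) (k : ℕ) : P.simpleComb (Finsupp.single a k) = k • (a : V) :=
  Finsupp.linearCombination_single ℕ k a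

theorem exists_simpleComb_eq (hβ : β ∈ P.Rpos) : ∃ c, P.simpleComb c = β := by
  have := P.pos_comb β hβ
  rw [← Subtype.range_coe (s := P.Δ), AddSubmonoid.mem_closure_range_iff] at this
  obtain ⟨c, rfl⟩ := this
  exact ⟨c, Finsupp.linearCombination_apply ℕ c⟩

theorem exists_simple_coroot_pos (hβ : β ∈ P.Rpos) : ∃ α ∈ P.Δ, 0 < P.coroot β α := by
  by_contra! h
  obtain ⟨c, rfl⟩ := P.exists_simpleComb_eq hβ
  have : P.coroot (P.simpleComb c) (P.simpleComb c) ≤ 0 := by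
    rw [simpleComb, Finsupp.linearCombination_apply, Finsupp.sum, map_sum]
    refine Finset.sum_nonpos fun a _ => ?_
    rw [map_nsmul, nsmul_eq_mul]
    exact mul_nonpos_of_nonneg_of_nonpos (Nat.cast_nonneg _) (h a a.2)
  rw [P.coroot_self _ (P.pos_subset hβ)] at this
  norm_num at this

theorem eq_one_of_nsmul_mem (hα : α ∈ P.R) {j : ℕ} (h : j • α ∈ P.R) : j = 1 := by
  obtain ⟨z, hz⟩ := P.coroot_int _ h α hα
  have h2 := P.coroot_self _ h
  rw [map_nsmul, hz, nsmul_eq_mul] at h2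
  have : (j : ℤ) * z = 2 := by exact_mod_cast h2
  rcases (by omega : j = 0 ∨ j = 1 ∨ j = 2 ∨ 3 ≤ j) with rfl | rfl | rfl | hj
  · exact absurd h (by simpa using P.ne_zero_of_mem h)
  · rfl
  · exact absurd (by simpa [two_smul] using h) (P.reduced α hα)
  · have : (j : ℤ) ≤ 2 := Int.le_of_dvd two_pos ⟨z, this.symm⟩
    omega

theorem sub_nsmul_mem_Rpos (hβ : β ∈ P.Rpos) (hβΔ : β ∉ P.Δ) (hα : α ∈ P.Δ) {m : ℕ}
    (hm : P.coroot α β = m) : β - m • α ∈ P.Rpos := by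
  have hR : β - m • α ∈ P.R := by
    simpa [hm, Nat.cast_smul_eq_nsmul] using
      P.reflect_mem α (P.simple_mem hα) β (P.pos_subset hβ)
  refine ((P.pos_or_neg _ hR).resolve_right fun ⟨hneg, _⟩ => hβΔ ?_).1
  obtain ⟨c, hc⟩ := P.exists_simpleComb_eq hβ
  obtain ⟨c', hc'⟩ := P.exists_simpleComb_eq hneg
  set a : P.Δ := ⟨α, hα⟩
  -- `β + (m α - β) = m α` and the coefficients on the simple roots are unique
  have hsum : c + c' = Finsupp.single a m :=
    P.simpleComb_injective (by rw [simpleComb_add, hc, hc', simpleComb_single]; abel)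
  have hc1 : c = Finsupp.single a (c a) := by
    ext i
    have := DFunLike.congr_fun hsum i
    by_cases hi : i = a
    · subst hi; simp
    · simp [Ne.symm hi] at this ⊢
      omega
  have hβα : β = c a • α := by
    conv_lhs => rw [← hc, hc1]
    exact P.simpleComb_single a _
  have := P.eq_one_of_nsmul_mem (P.simple_mem hα) (hβα ▸ P.pos_subset hβ)
  rwa [hβα, this, one_smul]

theorem reflection_mem_weyl (hα : α ∈ P.Δ) : P.reflection (P.simple_mem hα) ∈ Weyl P :=
  Subgroup.subset_closure ⟨α, hα, fun _ => rfl⟩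

theorem weyl_mapsTo {w : V ≃ₗ[ℚ] V} (hw : w ∈ Weyl P) : Set.MapsTo w P.R P.R := by
  have hgen : ∀ e ∈ weylGens P, Set.MapsTo e P.R P.R := by
    rintro e ⟨α, hα, he⟩ ρ hρ
    rw [he]
    exact P.reflect_mem α (P.simple_mem hα) ρ hρ
  induction hw using Subgroup.closure_induction'' with
  | mem e he => exact hgen e he
  | inv_mem e he =>
    obtain ⟨α, hα, he'⟩ := he
    obtain rfl : e = P.reflection (P.simple_mem hα) := LinearEquiv.ext he'
    exact hgen _ ⟨α, hα, he'⟩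
  | one => exact Set.mapsTo_id _
  | mul x y _ _ hx hy => exact hx.comp hy

theorem exists_weyl_eq_reflection_of_conj {t s : V ≃ₗ[ℚ] V} (ht : t ∈ Weyl P)
    (ht2 : Function.Involutive t) (hβ : β ∈ P.R) {β' : V} (hβ' : β' ∈ P.R) (htβ : t β = β')
    (hs : s ∈ Weyl P) (hsR : ∀ ρ ∈ P.R, s ρ = P.reflection hβ' ρ) :
    ∃ s' ∈ Weyl P, ∀ ρ ∈ P.R, s' ρ = P.reflection hβ ρ := by
  subst htβ
  have hs' : t * s * t ∈ Weyl P := mul_mem (mul_mem ht hs) ht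
  set g : Module.Dual ℚ V := P.coroot (t β) ∘ₗ t.toLinearMap
  have hconj : ∀ ρ ∈ P.R, (t * s * t) ρ = Module.preReflection β g ρ := by
    intro ρ hρ
    rw [LinearEquiv.mul_apply, LinearEquiv.mul_apply, hsR _ (P.weyl_mapsTo ht hρ),
      Module.reflection_apply, map_sub, map_smul, ht2, ht2, Module.preReflection_apply]
    rfl
  have hg : g β = 2 := P.coroot_self _ hβ'
  -- uniqueness of the coroot of `β`, given that both reflections preserve the finite set `R`
  have hcoroot := Module.Dual.eq_of_preReflection_mapsTo' P.finite_R (Submodule.subset_span hβ)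
    (P.coroot_self β hβ) (fun ρ hρ => P.reflect_mem β hβ ρ hρ) hg
    (fun ρ hρ => (hconj ρ hρ).symm ▸ P.weyl_mapsTo hs' hρ)
  refine ⟨_, hs', fun ρ hρ => ?_⟩
  have := LinearMap.congr_fun hcoroot ⟨ρ, Submodule.subset_span hρ⟩
  rw [hconj ρ hρ, Module.preReflection_apply, Module.reflection_apply]
  simp only [LinearMap.dualMap_apply, Submodule.subtype_apply] at this
  rw [this]

theorem exists_weyl_eq_reflection (hβ : β ∈ P.Rpos) :
    ∃ s ∈ Weyl P, ∀ ρ ∈ P.R, s ρ = P.reflection (P.pos_subset hβ) ρ := by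
  obtain ⟨c, hc⟩ := P.exists_simpleComb_eq hβ
  induction hN : c.degree using Nat.strong_induction_on generalizing c β with
  | _ N ih =>
    by_cases hβΔ : β ∈ P.Δ
    · exact ⟨_, P.reflection_mem_weyl hβΔ, fun _ _ => rfl⟩
    obtain ⟨α, hα, hpos⟩ := P.exists_simple_coroot_pos hβ
    obtain ⟨m, hm⟩ := P.coroot_int α (P.simple_mem hα) β (P.pos_subset hβ)
    have hm0 : 0 < m := by
      exact_mod_cast hm ▸ P.coroot_pos_of_coroot_pos (P.simple_mem hα) (P.pos_subset hβ) hpos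
    lift m to ℕ using hm0.le
    have hβ' := P.sub_nsmul_mem_Rpos hβ hβΔ hα (m := m) (by exact_mod_cast hm)
    obtain ⟨c', hc'⟩ := P.exists_simpleComb_eq hβ'
    have hcc' : c = c' + Finsupp.single ⟨α, hα⟩ m :=
      P.simpleComb_injective (by rw [simpleComb_add, hc, hc', simpleComb_single]; abel)
    obtain ⟨s, hs, hsR⟩ := ih c'.degree
      (by rw [← hN, hcc', map_add, Finsupp.degree_single]; omega) hβ' c' hc' rfl
    refine P.exists_weyl_eq_reflection_of_conj (P.reflection_mem_weyl hα)
      (Module.involutive_reflection _) _ _ ?_ hs hsR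
    rw [Module.reflection_apply, hm, Int.cast_natCast, Nat.cast_smul_eq_nsmul]

variable {δ : V} {k : ℤ} {S : Set (Module.Dual ℚ V)}

theorem up_eq_of_inStrip (hS : InStrip δ k S) (hne : S.Nonempty) :
    up P δ S = sAff δ (P.coroot δ) (k + 1) '' S := by
  rw [up, hS.upIdx_eq hne]

theorem down_eq_of_inStrip (hS : InStrip δ k S) (hne : S.Nonempty) :
    down P δ S = sAff δ (P.coroot δ) k '' S := by
  rw [down, hS.downIdx_eq hne]

theorem inStrip_up (hδ : δ ∈ P.R) (hS : InStrip δ k S) (hne : S.Nonempty) :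
    InStrip δ (k + 1) (up P δ S) :=
  P.up_eq_of_inStrip hS hne ▸ hS.image_sAff (P.coroot_self δ hδ) (by ring)

theorem inStrip_down (hδ : δ ∈ P.R) (hS : InStrip δ k S) (hne : S.Nonempty) :
    InStrip δ (k - 1) (down P δ S) :=
  P.down_eq_of_inStrip hS hne ▸ hS.image_sAff (P.coroot_self δ hδ) (by ring)

theorem down_up (hδ : δ ∈ P.R) (hS : InStrip δ k S) (hne : S.Nonempty) :
    down P δ (up P δ S) = S := by
  rw [P.down_eq_of_inStrip (P.inStrip_up hδ hS hne) (hne.image _), P.up_eq_of_inStrip hS hne]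
  exact (sAff_involutive (P.coroot_self δ hδ) _).leftInverse.image_image S

theorem up_down (hδ : δ ∈ P.R) (hS : InStrip δ k S) (hne : S.Nonempty) :
    up P δ (down P δ S) = S := by
  rw [P.up_eq_of_inStrip (P.inStrip_down hδ hS hne) (hne.image _), sub_add_cancel,
    P.down_eq_of_inStrip hS hne]
  exact (sAff_involutive (P.coroot_self δ hδ) _).leftInverse.image_image S

theorem mem_dualAct_image_Ae_iff {w : V ≃ₗ[ℚ] V} {v : Module.Dual ℚ V} :
    v ∈ dualAct w '' Ae P ↔ ∀ α ∈ P.Rpos, 0 < v (w α) ∧ v (w α) < 1 := by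
  refine ⟨?_, fun h => ⟨v ∘ₗ w.toLinearMap, h, ?_⟩⟩
  · rintro ⟨u, hu, rfl⟩ α hα
    simpa [dualAct] using hu α hα
  · ext x
    simp [dualAct]

theorem dualAct_image_mem_finAlc {w : V ≃ₗ[ℚ] V} (hw : w ∈ Weyl P) (hS : S ∈ finAlc P) :
    dualAct w '' S ∈ finAlc P := by
  obtain ⟨y, hy, rfl⟩ := hS
  exact ⟨w * y, mul_mem hw hy, by rw [Set.image_image]; rfl⟩

theorem dualAct_image_mem_finAlc_iff {w : V ≃ₗ[ℚ] V} (hw : w ∈ Weyl P) :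
    dualAct w '' S ∈ finAlc P ↔ S ∈ finAlc P := by
  refine ⟨fun h => ?_, P.dualAct_image_mem_finAlc hw⟩
  have hinv : Function.LeftInverse (dualAct w⁻¹) (dualAct w) := fun v => by
    ext x
    change v (w.symm (w x)) = v x
    rw [w.symm_apply_apply]
  simpa only [hinv.image_image] using P.dualAct_image_mem_finAlc (inv_mem hw) h

theorem inStrip_of_mem_finAlc (hS : S ∈ finAlc P) (hδ : δ ∈ P.Rpos) :
    InStrip δ 0 S ∨ InStrip δ (-1) S := by
  obtain ⟨w, hw, rfl⟩ := hS
  have hwδ : w⁻¹ δ ∈ P.R := P.weyl_mapsTo (inv_mem hw) (P.pos_subset hδ)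
  rcases P.pos_or_neg _ hwδ with ⟨hpos, -⟩ | ⟨hneg, -⟩
  · left
    intro v hv
    simpa using (P.mem_dualAct_image_Ae_iff.1 hv) _ hpos
  · right
    intro v hv
    have hwwδ : w (w⁻¹ δ) = δ := w.apply_symm_apply δ
    have := (P.mem_dualAct_image_Ae_iff.1 hv) _ hneg
    rw [map_neg, map_neg, hwwδ] at this
    push_cast
    constructor <;> linarith

theorem sAff_image_mem_finAlc (hδ : δ ∈ P.Rpos) (hS : S ∈ finAlc P) :
    sAff δ (P.coroot δ) 0 '' S ∈ finAlc P := by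
  obtain ⟨y, hy, rfl⟩ := hS
  obtain ⟨s, hs, hsR⟩ := P.exists_weyl_eq_reflection hδ
  refine ⟨s * y, mul_mem hs hy, Set.ext fun v => ?_⟩
  rw [(sAff_involutive (P.coroot_self δ (P.pos_subset hδ)) 0).image_eq_preimage_symm,
    Set.mem_preimage, mem_dualAct_image_Ae_iff, mem_dualAct_image_Ae_iff]
  refine forall₂_congr fun α hα => ?_
  rw [LinearEquiv.mul_apply, hsR _ (P.weyl_mapsTo hy (P.pos_subset hα)), Module.reflection_apply]
  simp [sAff, mul_comm]

theorem sAff_image_mem_finAlc_iff (hδ : δ ∈ P.Rpos) :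
    sAff δ (P.coroot δ) 0 '' S ∈ finAlc P ↔ S ∈ finAlc P := by
  refine ⟨fun h => ?_, P.sAff_image_mem_finAlc hδ⟩
  simpa only [(sAff_involutive (P.coroot_self δ (P.pos_subset hδ)) 0).leftInverse.image_image]
    using P.sAff_image_mem_finAlc hδ h

theorem up_mem_finAlc_iff (hδ : δ ∈ P.Rpos) (hS : InStrip δ (-1) S) (hne : S.Nonempty) :
    up P δ S ∈ finAlc P ↔ S ∈ finAlc P := by
  rw [P.up_eq_of_inStrip hS hne, neg_add_cancel, P.sAff_image_mem_finAlc_iff hδ]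

theorem down_mem_finAlc_iff (hδ : δ ∈ P.Rpos) (hS : InStrip δ 0 S) (hne : S.Nonempty) :
    down P δ S ∈ finAlc P ↔ S ∈ finAlc P := by
  rw [P.down_eq_of_inStrip hS hne, P.sAff_image_mem_finAlc_iff hδ]

theorem inStrip_of_mem_Aminus (hδ : δ ∈ P.Rpos) (hS : S ∈ Aminus P δ) : InStrip δ (-1) S := by
  rcases P.inStrip_of_mem_finAlc hS.1 hδ with h | h
  · intro v hv
    have h0 : v δ < ((0 : ℤ) : ℚ) := hS.2 hv
    have := (h v hv).1
    push_cast at h0 this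
    exact absurd h0 this.not_gt
  · exact h

theorem mem_Aminus_iff (hδ : δ ∈ P.Rpos) (hS : InStrip δ k S) (hne : S.Nonempty) :
    S ∈ Aminus P δ ↔ S ∈ finAlc P ∧ k = -1 := by
  refine ⟨fun h => ⟨h.1, hS.eq (P.inStrip_of_mem_Aminus hδ h) hne⟩, ?_⟩
  rintro ⟨hfin, rfl⟩
  refine ⟨hfin, fun v hv => ?_⟩
  have := (hS v hv).2
  show v δ < ((0 : ℤ) : ℚ)
  push_cast at this ⊢
  linarith

theorem mem_up_image_Aminus_iff (hδ : δ ∈ P.Rpos) (hS : InStrip δ k S) (hne : S.Nonempty) :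
    S ∈ up P δ '' Aminus P δ ↔ down P δ S ∈ Aminus P δ := by
  refine ⟨?_, fun h => ⟨_, h, P.up_down (P.pos_subset hδ) hS hne⟩⟩
  rintro ⟨D, hD, rfl⟩
  rwa [P.down_up (P.pos_subset hδ) (P.inStrip_of_mem_Aminus hδ hD) hne.of_image]

theorem mem_down_image_Aminus_iff (hδ : δ ∈ P.Rpos) (hS : InStrip δ k S) (hne : S.Nonempty) :
    S ∈ down P δ '' Aminus P δ ↔ up P δ S ∈ Aminus P δ := by
  refine ⟨?_, fun h => ⟨_, h, P.down_up (P.pos_subset hδ) hS hne⟩⟩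
  rintro ⟨D, hD, rfl⟩
  rwa [P.up_down (P.pos_subset hδ) (P.inStrip_of_mem_Aminus hδ hD) hne.of_image]

end RootSystemData

theorem stmt16_general {V : Type*} [AddCommGroup V] [Module ℚ V] (P : RootSystemData V)
    (w0 : V ≃ₗ[ℚ] V) (hw0 : w0 ∈ Weyl P)
    (hlong : ∀ γ ∈ P.Rpos, -(w0 γ) ∈ P.Rpos)
    (β : V) (hβ : β ∈ P.Rpos) (A : Set (Module.Dual ℚ V)) (hA : IsAlcove P A) :
    (dualAct w0 '' up P β A ∈ Aminus P (-(w0 β)) ↔ A ∈ Aminus P β) ∧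
    (dualAct w0 '' up P β A ∈ (up P (-(w0 β))) '' Aminus P (-(w0 β)) ↔
      A ∈ (down P β) '' Aminus P β) := by
  obtain ⟨hne, d, hAd⟩ := hA
  have hA : InStrip β (d β) A := fun v hv => by rw [hAd] at hv; exact hv β hβ
  generalize d β = k at hA
  have hγ := hlong β hβ
  have hβR := P.pos_subset hβ
  have hC := P.inStrip_up hβR hA hne
  have hCne : (up P β A).Nonempty := hne.image _
  have hE : InStrip (-(w0 β)) (-k - 2) (dualAct w0 '' up P β A) := by
    convert hC.image_dualAct w0 using 1
    ring
  have hEne := hCne.image (dualAct w0)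
  constructor
  · rw [P.mem_Aminus_iff hγ hE hEne, P.mem_Aminus_iff hβ hA hne,
      P.dualAct_image_mem_finAlc_iff hw0]
    constructor <;> rintro ⟨hfin, hk⟩ <;> obtain rfl : k = -1 := by omega
    · exact ⟨(P.up_mem_finAlc_iff hβ hA hne).1 hfin, rfl⟩
    · exact ⟨(P.up_mem_finAlc_iff hβ hA hne).2 hfin, by norm_num⟩
  · rw [P.mem_up_image_Aminus_iff hγ hE hEne, P.mem_down_image_Aminus_iff hβ hA hne,
      P.mem_Aminus_iff hγ (P.inStrip_down (P.pos_subset hγ) hE hEne) (hEne.image _),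
      P.mem_Aminus_iff hβ hC hCne]
    constructor <;> rintro ⟨hfin, hk⟩ <;> obtain rfl : k = -2 := by omega
    · exact ⟨(P.dualAct_image_mem_finAlc_iff hw0).1 ((P.down_mem_finAlc_iff hγ hE hEne).1 hfin),
        by norm_num⟩
    · exact ⟨(P.down_mem_finAlc_iff hγ hE hEne).2 ((P.dualAct_image_mem_finAlc_iff hw0).2 hfin),
        by norm_num⟩

/-- `w₀.(β↑A) ∈ 𝒜⁻_{w₀(β)⁺}` iff `A ∈ 𝒜⁻_β`, and
`w₀.(β↑A) ∈ w₀(β)⁺ ↑ 𝒜⁻_{w₀(β)⁺}` iff `A ∈ β ↓ 𝒜⁻_β`. -/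
theorem stmt16 {V : Type*} [AddCommGroup V] [Module ℚ V] (P : RootSystemData V)
    (w0 : V ≃ₗ[ℚ] V) (hw0 : w0 ∈ Weyl P)
    (hlong : ∀ γ ∈ P.Rpos, -(w0 γ) ∈ P.Rpos)
    (hequiv : ∀ γ x : V, P.coroot (w0 γ) x = P.coroot γ (w0.symm x))
    (β : V) (hβ : β ∈ P.Rpos) (A : Set (Module.Dual ℚ V)) (hA : IsAlcove P A) :
    (dualAct w0 '' up P β A ∈ Aminus P (-(w0 β)) ↔ A ∈ Aminus P β) ∧
    (dualAct w0 '' up P β A ∈ (up P (-(w0 β))) '' Aminus P (-(w0 β)) ↔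
      A ∈ (down P β) '' Aminus P β) :=
  stmt16_general P w0 hw0 hlong β hβ A hA
end
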